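/- arXiv:1609.02650 — 5 statements merged into one kernel-verified Lean document; each statement's English description precedes it below -/
import Mathlib

section
/- Let C be a complex d×d matrix taking values in the sector Σ_θ = {r e^{iβ} : r ≥ 0, |β| ≤ θ}, i.e. (C ξ, ξ) ∈ Σ_θ for all ξ ∈ ℂ^d, where θ ∈ [0, π/2). Write C = R + iB with R, B real, and let R_s, R_a be the symmetric and antisymmetric parts of R, and B_s, B_a those of B. Then |(B_s ξ, ξ) + (B_s η, η) − 2(R_a ξ, η)| ≤ (tan θ)((R_s ξ, ξ) + (R_s η, η) + 2(B_a ξ, η)) for all ξ, η ∈ ℝ^d. -/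
open Matrix

/-- The closed sector with vertex 0 and semi-angle θ in the complex plane. -/
def sector (θ : ℝ) : Set ℂ :=
  {z | ∃ r β : ℝ, 0 ≤ r ∧ |β| ≤ θ ∧ z = r * Complex.exp (β * Complex.I)}

lemma sector_bound' {θ : ℝ} (hθ : θ ∈ Set.Ico 0 (Real.pi / 2)) {z : ℂ}
    (hz : z ∈ sector θ) :
    |z.im| ≤ Real.tan θ * z.re := by
  obtain ⟨r, β, hr, hβ, rfl⟩ := hz
  have hβlt : |β| < Real.pi / 2 := lt_of_le_of_lt hβ hθ.2
  obtain ⟨hβ1, hβ2⟩ := abs_lt.mp hβlt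
  have hcos : 0 < Real.cos β := Real.cos_pos_of_mem_Ioo ⟨hβ1, hβ2⟩
  have hre : ((r : ℂ) * Complex.exp (β * Complex.I)).re = r * Real.cos β := by
    simp [Complex.exp_ofReal_mul_I_re, Complex.mul_re]
  have him : ((r : ℂ) * Complex.exp (β * Complex.I)).im = r * Real.sin β := by
    simp [Complex.exp_ofReal_mul_I_im, Complex.mul_im]
  rw [hre, him]
  obtain ⟨hb1, hb2⟩ := abs_le.mp hβ
  have htan : |Real.tan β| ≤ Real.tan θ := by
    rw [abs_le]
    have h1 : Real.tan β ≤ Real.tan θ :=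
      Real.strictMonoOn_tan.monotoneOn ⟨hβ1, hβ2⟩ ⟨by linarith [hθ.1], hθ.2⟩ hb2
    have h2 : Real.tan (-θ) ≤ Real.tan β :=
      Real.strictMonoOn_tan.monotoneOn ⟨by linarith [hθ.2], by linarith [hθ.1, Real.pi_pos]⟩
        ⟨hβ1, hβ2⟩ hb1
    rw [Real.tan_neg] at h2
    exact ⟨h2, h1⟩
  have hsin : Real.sin β = Real.tan β * Real.cos β := (Real.tan_mul_cos hcos.ne').symm
  rw [abs_mul, abs_of_nonneg hr, hsin, abs_mul, abs_of_pos hcos]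
  calc r * (|Real.tan β| * Real.cos β) ≤ r * (Real.tan θ * Real.cos β) := by
        apply mul_le_mul_of_nonneg_left (by nlinarith) hr
    _ = Real.tan θ * (r * Real.cos β) := by ring

lemma quad_expand (d : ℕ) (C : Matrix (Fin d) (Fin d) ℂ) (R B : Matrix (Fin d) (Fin d) ℝ)
    (hRB : ∀ k l, C k l = (R k l : ℂ) + (B k l : ℂ) * Complex.I)
    (ξ η : Fin d → ℝ) :
    C.mulVec (fun k => (ξ k : ℂ) + (η k : ℂ) * Complex.I) ⬝ᵥ
      star (fun k => (ξ k : ℂ) + (η k : ℂ) * Complex.I)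
    = ((R.mulVec ξ ⬝ᵥ ξ + R.mulVec η ⬝ᵥ η + (B.mulVec ξ ⬝ᵥ η - B.mulVec η ⬝ᵥ ξ) : ℝ) : ℂ)
      + ((B.mulVec ξ ⬝ᵥ ξ + B.mulVec η ⬝ᵥ η - (R.mulVec ξ ⬝ᵥ η - R.mulVec η ⬝ᵥ ξ) : ℝ) : ℂ)
        * Complex.I := by
  have key : ∀ k : Fin d, ∀ i : Fin d,
      C k i * ((ξ i : ℂ) + (η i : ℂ) * Complex.I) * star ((ξ k : ℂ) + (η k : ℂ) * Complex.I)
      = ((R k i * ξ i * ξ k + R k i * η i * η k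
          + (B k i * ξ i * η k - B k i * η i * ξ k) : ℝ) : ℂ)
        + ((B k i * ξ i * ξ k + B k i * η i * η k
          - (R k i * ξ i * η k - R k i * η i * ξ k) : ℝ) : ℂ) * Complex.I := by
    intro k i
    rw [hRB]
    apply Complex.ext <;> simp <;> ring
  calc C.mulVec (fun k => (ξ k : ℂ) + (η k : ℂ) * Complex.I) ⬝ᵥ
      star (fun k => (ξ k : ℂ) + (η k : ℂ) * Complex.I)
      = ∑ k : Fin d, ∑ i : Fin d,
        (((R k i * ξ i * ξ k + R k i * η i * η k
            + (B k i * ξ i * η k - B k i * η i * ξ k) : ℝ) : ℂ)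
        + ((B k i * ξ i * ξ k + B k i * η i * η k
            - (R k i * ξ i * η k - R k i * η i * ξ k) : ℝ) : ℂ) * Complex.I) := by
        simp only [mulVec, dotProduct, Pi.star_apply, Finset.sum_mul]
        exact Finset.sum_congr rfl fun k _ => Finset.sum_congr rfl fun i _ => key k i
    _ = _ := by
        simp only [mulVec, dotProduct, Complex.ofReal_sum, Complex.ofReal_add, Complex.ofReal_sub,
          Complex.ofReal_mul, Finset.sum_mul, Finset.mul_sum, Finset.sum_add_distrib,
          Finset.sum_sub_distrib, sub_mul, add_mul]

lemma transp_dot (d : ℕ) (M : Matrix (Fin d) (Fin d) ℝ) (x y : Fin d → ℝ) :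
    Mᵀ.mulVec x ⬝ᵥ y = M.mulVec y ⬝ᵥ x := by
  simp only [mulVec, dotProduct, transpose_apply, Finset.sum_mul]
  rw [Finset.sum_comm]
  exact Finset.sum_congr rfl fun k _ => Finset.sum_congr rfl fun i _ => by ring

theorem stmt_2 (d : ℕ) (θ : ℝ) (hθ : θ ∈ Set.Ico 0 (Real.pi / 2))
    (C : Matrix (Fin d) (Fin d) ℂ) (R B : Matrix (Fin d) (Fin d) ℝ)
    (hRB : ∀ k l, C k l = (R k l : ℂ) + (B k l : ℂ) * Complex.I)
    (hsec : ∀ ξ : Fin d → ℂ, C.mulVec ξ ⬝ᵥ star ξ ∈ sector θ) :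
    ∀ ξ η : Fin d → ℝ,
      |(((1 / 2 : ℝ) • (B + Bᵀ)).mulVec ξ ⬝ᵥ ξ)
        + (((1 / 2 : ℝ) • (B + Bᵀ)).mulVec η ⬝ᵥ η)
        - 2 * (((1 / 2 : ℝ) • (R - Rᵀ)).mulVec ξ ⬝ᵥ η)| ≤
      Real.tan θ *
        ((((1 / 2 : ℝ) • (R + Rᵀ)).mulVec ξ ⬝ᵥ ξ)
          + (((1 / 2 : ℝ) • (R + Rᵀ)).mulVec η ⬝ᵥ η)
          + 2 * (((1 / 2 : ℝ) • (B - Bᵀ)).mulVec ξ ⬝ᵥ η)) := by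
  intro ξ η
  have hz := sector_bound' hθ (hsec (fun k => (ξ k : ℂ) + (η k : ℂ) * Complex.I))
  rw [quad_expand d C R B hRB ξ η] at hz
  have him : (((R.mulVec ξ ⬝ᵥ ξ + R.mulVec η ⬝ᵥ η + (B.mulVec ξ ⬝ᵥ η - B.mulVec η ⬝ᵥ ξ) : ℝ) : ℂ)
      + ((B.mulVec ξ ⬝ᵥ ξ + B.mulVec η ⬝ᵥ η - (R.mulVec ξ ⬝ᵥ η - R.mulVec η ⬝ᵥ ξ) : ℝ) : ℂ)
        * Complex.I).im
      = B.mulVec ξ ⬝ᵥ ξ + B.mulVec η ⬝ᵥ η - (R.mulVec ξ ⬝ᵥ η - R.mulVec η ⬝ᵥ ξ) := by simp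
  have hre : (((R.mulVec ξ ⬝ᵥ ξ + R.mulVec η ⬝ᵥ η + (B.mulVec ξ ⬝ᵥ η - B.mulVec η ⬝ᵥ ξ) : ℝ) : ℂ)
      + ((B.mulVec ξ ⬝ᵥ ξ + B.mulVec η ⬝ᵥ η - (R.mulVec ξ ⬝ᵥ η - R.mulVec η ⬝ᵥ ξ) : ℝ) : ℂ)
        * Complex.I).re
      = R.mulVec ξ ⬝ᵥ ξ + R.mulVec η ⬝ᵥ η + (B.mulVec ξ ⬝ᵥ η - B.mulVec η ⬝ᵥ ξ) := by simp
  rw [him, hre] at hz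
  have hL : (((1 / 2 : ℝ) • (B + Bᵀ)).mulVec ξ ⬝ᵥ ξ)
        + (((1 / 2 : ℝ) • (B + Bᵀ)).mulVec η ⬝ᵥ η)
        - 2 * (((1 / 2 : ℝ) • (R - Rᵀ)).mulVec ξ ⬝ᵥ η)
      = B.mulVec ξ ⬝ᵥ ξ + B.mulVec η ⬝ᵥ η - (R.mulVec ξ ⬝ᵥ η - R.mulVec η ⬝ᵥ ξ) := by
    simp only [smul_mulVec, add_mulVec, sub_mulVec, smul_dotProduct, add_dotProduct,
      sub_dotProduct, smul_eq_mul, transp_dot]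
    ring
  have hR : (((1 / 2 : ℝ) • (R + Rᵀ)).mulVec ξ ⬝ᵥ ξ)
        + (((1 / 2 : ℝ) • (R + Rᵀ)).mulVec η ⬝ᵥ η)
        + 2 * (((1 / 2 : ℝ) • (B - Bᵀ)).mulVec ξ ⬝ᵥ η)
      = R.mulVec ξ ⬝ᵥ ξ + R.mulVec η ⬝ᵥ η + (B.mulVec ξ ⬝ᵥ η - B.mulVec η ⬝ᵥ ξ) := by
    simp only [smul_mulVec, add_mulVec, sub_mulVec, smul_dotProduct, add_dotProduct,
      sub_dotProduct, smul_eq_mul, transp_dot]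
    ring
  rw [hL, hR]
  exact hz
end

section
/- Let C = R + iB be a complex d×d matrix with (C ξ, ξ) ∈ Σ_θ for all ξ ∈ ℂ^d where θ ∈ [0, π/2), and with antisymmetric part B_a of B equal to zero. Then for all ξ ∈ ℂ^d: (a) (R_s ξ, ξ) ≥ 0; (b) (((tan θ) R_s ± B_s) ξ, ξ) ≥ 0; (c) ((2(tan θ) R_s ± i R_a) ξ, ξ) ≥ 0, where the left-hand sides in (b) and (c) are real. -/
/-!
Write C = H₁ + i (H₂ - H₃) with the Hermitian matrices H₁ = R_s, H₂ = B_s = B and H₃ = i R_a. Then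
(Cξ, ξ) has real part (H₁ξ, ξ) and imaginary part ((H₂ - H₃)ξ, ξ), so the sector condition reads
|((H₂ - H₃)ξ, ξ)| ≤ tan θ (R_s ξ, ξ). Applied to the conjugate vector, i.e. to
Cᵀ = H₁ + i (H₂ + H₃), it also gives |((H₂ + H₃)ξ, ξ)| ≤ tan θ (R_s ξ, ξ); (b) and (c) are sums and differences of
these two bounds.
-/

open Matrix

/-- Symmetric part of a real matrix. -/
noncomputable def symPart {d : ℕ} (M : Matrix (Fin d) (Fin d) ℝ) : Matrix (Fin d) (Fin d) ℝ :=
  (1 / 2 : ℝ) • (M + Mᵀ)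

/-- Antisymmetric part of a real matrix. -/
noncomputable def antiPart {d : ℕ} (M : Matrix (Fin d) (Fin d) ℝ) : Matrix (Fin d) (Fin d) ℝ :=
  (1 / 2 : ℝ) • (M - Mᵀ)

lemma re_nonneg_and_abs_im_le_of_mem_sector {θ : ℝ} (hθ : θ < Real.pi / 2) {z : ℂ}
    (hz : z ∈ sector θ) : 0 ≤ z.re ∧ |z.im| ≤ Real.tan θ * z.re := by
  obtain ⟨r, β, hr, hβ, rfl⟩ := hz
  obtain ⟨hβl, hβu⟩ := abs_le.mp hβ
  have hβ_mem : β ∈ Set.Ioo (-(Real.pi / 2)) (Real.pi / 2) := ⟨by linarith, by linarith⟩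
  have hθ_mem : θ ∈ Set.Ioo (-(Real.pi / 2)) (Real.pi / 2) := ⟨by linarith, hθ⟩
  have hnθ_mem : -θ ∈ Set.Ioo (-(Real.pi / 2)) (Real.pi / 2) := ⟨by linarith, by linarith⟩
  have hcos : 0 < Real.cos β := Real.cos_pos_of_mem_Ioo hβ_mem
  have htan : |Real.tan β| ≤ Real.tan θ := by
    refine abs_le.mpr ⟨?_, Real.strictMonoOn_tan.monotoneOn hβ_mem hθ_mem hβu⟩
    simpa [Real.tan_neg] using Real.strictMonoOn_tan.monotoneOn hnθ_mem hβ_mem hβl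
  have hre : ((r : ℂ) * Complex.exp (β * Complex.I)).re = r * Real.cos β := by
    simp [Complex.mul_re, Complex.exp_ofReal_mul_I_re, Complex.exp_ofReal_mul_I_im]
  have him : ((r : ℂ) * Complex.exp (β * Complex.I)).im = Real.tan β * (r * Real.cos β) := by
    simp only [Complex.mul_im, Complex.ofReal_re, Complex.ofReal_im, Complex.exp_ofReal_mul_I_re,
      Complex.exp_ofReal_mul_I_im, ← Real.tan_mul_cos hcos.ne', zero_mul, add_zero]
    ring
  have hre_nonneg : 0 ≤ r * Real.cos β := mul_nonneg hr hcos.le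
  rw [hre, him, abs_mul, abs_of_nonneg hre_nonneg]
  exact ⟨hre_nonneg, mul_le_mul_of_nonneg_right htan hre_nonneg⟩

namespace Matrix

variable {n : Type*}

lemma isHermitian_map_ofReal {S : Matrix n n ℝ} (hS : S.IsSymm) :
    (S.map Complex.ofReal).IsHermitian :=
  (isHermitian_iff_isSymm.mpr hS).map _ fun _ ↦ (Complex.conj_ofReal _).symm

lemma isHermitian_I_smul_map_ofReal {K : Matrix n n ℝ} (hK : Kᵀ = -K) :
    (Complex.I • K.map Complex.ofReal).IsHermitian := by
  refine IsHermitian.ext fun i j ↦ ?_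
  have hK_ij : K j i = -K i j := congrFun (congrFun hK i) j
  simp [hK_ij]

variable [Fintype n]

lemma transpose_mulVec_dotProduct_star (M : Matrix n n ℂ) (ξ : n → ℂ) :
    Mᵀ *ᵥ ξ ⬝ᵥ star ξ = M *ᵥ star ξ ⬝ᵥ star (star ξ) := by
  rw [mulVec_transpose, star_star, ← dotProduct_mulVec, dotProduct_comm]

lemma mulVec_dotProduct_star_smul_add_smul (A K : Matrix n n ℂ) (a b : ℝ) (ξ : n → ℂ) :
    (a • A + b • K) *ᵥ ξ ⬝ᵥ star ξ = a * (A *ᵥ ξ ⬝ᵥ star ξ) + b * (K *ᵥ ξ ⬝ᵥ star ξ) := by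
  simp [add_mulVec, smul_mulVec, add_dotProduct, smul_dotProduct, Complex.real_smul]

lemma IsHermitian.im_mulVec_dotProduct_star {A : Matrix n n ℂ} (hA : A.IsHermitian)
    (ξ : n → ℂ) : (A *ᵥ ξ ⬝ᵥ star ξ).im = 0 := by
  simpa [dotProduct_comm] using hA.im_star_dotProduct_mulVec_self ξ

lemma re_mulVec_dotProduct_star_add_I_smul (A : Matrix n n ℂ) {K : Matrix n n ℂ}
    (hK : K.IsHermitian) (ξ : n → ℂ) :
    ((A + Complex.I • K) *ᵥ ξ ⬝ᵥ star ξ).re = (A *ᵥ ξ ⬝ᵥ star ξ).re := by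
  simp [add_mulVec, smul_mulVec, add_dotProduct, smul_dotProduct, hK.im_mulVec_dotProduct_star]

lemma im_mulVec_dotProduct_star_add_I_smul {A : Matrix n n ℂ} (hA : A.IsHermitian)
    (K : Matrix n n ℂ) (ξ : n → ℂ) :
    ((A + Complex.I • K) *ᵥ ξ ⬝ᵥ star ξ).im = (K *ᵥ ξ ⬝ᵥ star ξ).re := by
  simp [add_mulVec, smul_mulVec, add_dotProduct, smul_dotProduct, hA.im_mulVec_dotProduct_star]

lemma re_nonneg_and_abs_re_le_of_mem_sector {θ : ℝ} (hθ : θ < Real.pi / 2)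
    {A K : Matrix n n ℂ} (hA : A.IsHermitian) (hK : K.IsHermitian) {ξ : n → ℂ}
    (h : (A + Complex.I • K) *ᵥ ξ ⬝ᵥ star ξ ∈ sector θ) :
    0 ≤ (A *ᵥ ξ ⬝ᵥ star ξ).re ∧ |(K *ᵥ ξ ⬝ᵥ star ξ).re| ≤ Real.tan θ * (A *ᵥ ξ ⬝ᵥ star ξ).re := by
  simpa only [re_mulVec_dotProduct_star_add_I_smul A hK, im_mulVec_dotProduct_star_add_I_smul hA]
    using re_nonneg_and_abs_im_le_of_mem_sector hθ h

end Matrix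

section

variable {d : ℕ}

lemma symPart_add_antiPart (M : Matrix (Fin d) (Fin d) ℝ) : symPart M + antiPart M = M := by
  ext i j
  simp only [symPart, antiPart, Matrix.add_apply, Matrix.sub_apply, Matrix.smul_apply,
    transpose_apply, smul_eq_mul]
  ring

lemma isSymm_symPart (M : Matrix (Fin d) (Fin d) ℝ) : (symPart M).IsSymm :=
  IsSymm.ext fun i j ↦ by simp [symPart, add_comm]

lemma transpose_antiPart (M : Matrix (Fin d) (Fin d) ℝ) : (antiPart M)ᵀ = -antiPart M := by
  ext i j
  simp only [antiPart, Matrix.neg_apply, Matrix.sub_apply, Matrix.smul_apply, transpose_apply,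
    smul_eq_mul]
  ring

lemma map_ofReal_add_I_smul_eq (R B : Matrix (Fin d) (Fin d) ℝ) :
    R.map Complex.ofReal + Complex.I • B.map Complex.ofReal =
      (symPart R).map Complex.ofReal +
        Complex.I • (B.map Complex.ofReal - Complex.I • (antiPart R).map Complex.ofReal) := by
  ext k l
  simp only [symPart, antiPart, Matrix.add_apply, Matrix.sub_apply, Matrix.smul_apply, map_apply,
    transpose_apply, smul_eq_mul]
  push_cast
  linear_combination ((R k l : ℂ) - R l k) / 2 * Complex.I_sq

lemma transpose_map_ofReal_add_I_smul_eq (R : Matrix (Fin d) (Fin d) ℝ)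
    {B : Matrix (Fin d) (Fin d) ℝ} (hB : B.IsSymm) :
    (R.map Complex.ofReal + Complex.I • B.map Complex.ofReal)ᵀ =
      (symPart R).map Complex.ofReal +
        Complex.I • (B.map Complex.ofReal + Complex.I • (antiPart R).map Complex.ofReal) := by
  ext k l
  simp only [hB.apply k l, symPart, antiPart, Matrix.add_apply, Matrix.sub_apply,
    Matrix.smul_apply, map_apply, transpose_apply, smul_eq_mul]
  push_cast
  linear_combination ((R l k : ℂ) - R k l) / 2 * Complex.I_sq

end

theorem stmt_5 (d : ℕ) (θ : ℝ) (hθ : θ ∈ Set.Ico 0 (Real.pi / 2))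
    (C : Matrix (Fin d) (Fin d) ℂ) (R B : Matrix (Fin d) (Fin d) ℝ)
    (hRB : ∀ k l, C k l = (R k l : ℂ) + (B k l : ℂ) * Complex.I)
    (hsec : ∀ ξ : Fin d → ℂ, C.mulVec ξ ⬝ᵥ star ξ ∈ sector θ)
    (hBa : antiPart B = 0) :
    ∀ ξ : Fin d → ℂ,
      -- (a)
      (((symPart R).map Complex.ofReal).mulVec ξ ⬝ᵥ star ξ).im = 0 ∧
      0 ≤ (((symPart R).map Complex.ofReal).mulVec ξ ⬝ᵥ star ξ).re ∧
      -- (b)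
      (∀ s : ℝ, s = 1 ∨ s = -1 →
        ((((Real.tan θ • symPart R + s • symPart B).map Complex.ofReal).mulVec ξ
            ⬝ᵥ star ξ).im = 0 ∧
        0 ≤ (((Real.tan θ • symPart R + s • symPart B).map Complex.ofReal).mulVec ξ
            ⬝ᵥ star ξ).re)) ∧
      -- (c)
      (∀ s : ℝ, s = 1 ∨ s = -1 →
        ((((2 * Real.tan θ) • ((symPart R).map Complex.ofReal)
            + (s : ℂ) • Complex.I • ((antiPart R).map Complex.ofReal)).mulVec ξ
            ⬝ᵥ star ξ).im = 0 ∧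
        0 ≤ (((2 * Real.tan θ) • ((symPart R).map Complex.ofReal)
            + (s : ℂ) • Complex.I • ((antiPart R).map Complex.ofReal)).mulVec ξ
            ⬝ᵥ star ξ).re)) := by
  intro ξ
  have hBs : symPart B = B := by simpa [hBa] using symPart_add_antiPart B
  have hB : B.IsSymm := hBs ▸ isSymm_symPart B
  have hC : C = R.map Complex.ofReal + Complex.I • B.map Complex.ofReal := by
    ext k l
    simp [hRB, mul_comm]
  set H₁ := (symPart R).map Complex.ofReal
  set H₂ := B.map Complex.ofReal
  set H₃ := Complex.I • (antiPart R).map Complex.ofReal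
  have hH₁ : H₁.IsHermitian := isHermitian_map_ofReal (isSymm_symPart R)
  have hH₂ : H₂.IsHermitian := isHermitian_map_ofReal hB
  have hH₃ : H₃.IsHermitian := isHermitian_I_smul_map_ofReal (transpose_antiPart R)
  have h_fwd := re_nonneg_and_abs_re_le_of_mem_sector hθ.2 hH₁ (hH₂.sub hH₃)
    (by rw [← map_ofReal_add_I_smul_eq, ← hC]; exact hsec ξ)
  have h_bwd := re_nonneg_and_abs_re_le_of_mem_sector hθ.2 hH₁ (hH₂.add hH₃)
    (by rw [← transpose_map_ofReal_add_I_smul_eq R hB, ← hC, transpose_mulVec_dotProduct_star]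
        exact hsec (star ξ))
  have hMb : ∀ s : ℝ, (Real.tan θ • symPart R + s • B).map Complex.ofReal
      = Real.tan θ • H₁ + s • H₂ := fun s ↦ by ext; simp [H₁, H₂]
  simp only [hBs, hMb, Complex.coe_smul, mulVec_dotProduct_star_smul_add_smul]
  simp only [add_mulVec, sub_mulVec, add_dotProduct, sub_dotProduct, Complex.add_re,
    Complex.sub_re, abs_le] at h_fwd h_bwd
  have hq₁ := hH₁.im_mulVec_dotProduct_star ξ
  have hq₂ := hH₂.im_mulVec_dotProduct_star ξ
  have hq₃ := hH₃.im_mulVec_dotProduct_star ξ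
  refine ⟨hq₁, h_fwd.1, fun s hs ↦ ?_, fun s hs ↦ ?_⟩ <;>
    simp only [Complex.add_im, Complex.add_re, Complex.re_ofReal_mul, Complex.im_ofReal_mul,
      hq₁, hq₂, hq₃, mul_zero, add_zero, true_and] <;>
    rcases hs with rfl | rfl <;> linarith
end

section
/- Let p ∈ (1, ∞) and θ ∈ [0, π/2) with |1 − 2/p| < cos θ, and set φ = arccos|1 − 2/p|. Let R_s, B_s be real symmetric d×d matrices with R_s positive semidefinite and |(B_s ξ, η)| ≤ (1/2)(tan θ)((R_s ξ, ξ) + (R_s η, η)) for all ξ, η ∈ ℝ^d. Then (tan(π/2 − φ) + tan θ)((R_s ξ, ξ) + (R_s η, η)) ≤ tan(π/2 − φ + θ)((R_s ξ, ξ) + (R_s η, η) + ((p−2)/√(p−1))(B_s ξ, η)) for all ξ, η ∈ ℝ^d. -/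
open Matrix

set_option maxHeartbeats 1000000 in
theorem stmt_7 (d : ℕ) (p θ : ℝ) (hp : 1 < p)
    (hθ : θ ∈ Set.Ico 0 (Real.pi / 2))
    (hpθ : |1 - 2 / p| < Real.cos θ)
    (Rs Bs : Matrix (Fin d) (Fin d) ℝ)
    (hRsym : Rs.IsSymm) (hBsym : Bs.IsSymm)
    (hpos : ∀ ξ : Fin d → ℝ, 0 ≤ Rs.mulVec ξ ⬝ᵥ ξ)
    (hdom : ∀ ξ η : Fin d → ℝ, |Bs.mulVec ξ ⬝ᵥ η| ≤
      (1 / 2) * Real.tan θ * (Rs.mulVec ξ ⬝ᵥ ξ + Rs.mulVec η ⬝ᵥ η)) :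
    ∀ ξ η : Fin d → ℝ,
      (Real.tan (Real.pi / 2 - Real.arccos |1 - 2 / p|) + Real.tan θ) *
          (Rs.mulVec ξ ⬝ᵥ ξ + Rs.mulVec η ⬝ᵥ η) ≤
        Real.tan (Real.pi / 2 - Real.arccos |1 - 2 / p| + θ) *
          (Rs.mulVec ξ ⬝ᵥ ξ + Rs.mulVec η ⬝ᵥ η
            + ((p - 2) / Real.sqrt (p - 1)) * (Bs.mulVec ξ ⬝ᵥ η)) := by
  intro ξ η
  have hp0 : (0 : ℝ) < p := lt_trans one_pos hp
  obtain ⟨hθ0, hθlt⟩ := hθ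
  have hpi : (0:ℝ) < Real.pi := Real.pi_pos
  have habs0 : 0 ≤ |1 - 2 / p| := abs_nonneg _
  have hcosθ1 : Real.cos θ ≤ 1 := Real.cos_le_one θ
  have habs1 : |1 - 2 / p| ≤ 1 := le_of_lt (lt_of_lt_of_le hpθ hcosθ1)
  set a := Real.arccos |1 - 2 / p| with ha
  -- θ < a
  have hθa : θ < a := by
    have h1 : Real.arccos (Real.cos θ) < Real.arccos |1 - 2 / p| :=
      Real.strictAntiOn_arccos ⟨by linarith, habs1⟩
        ⟨by linarith [Real.neg_one_le_cos θ], hcosθ1⟩ hpθ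
    rwa [Real.arccos_cos hθ0 (by linarith)] at h1
  have hapd : a ≤ Real.pi / 2 := Real.arccos_le_pi_div_two.2 habs0
  set α := Real.pi / 2 - a with hα
  have hα0 : 0 ≤ α := by simp [hα]; linarith
  have hαθ : α + θ < Real.pi / 2 := by simp only [hα]; linarith
  have hcα : 0 < Real.cos α :=
    Real.cos_pos_of_mem_Ioo ⟨by linarith, by linarith⟩
  have hcθ : 0 < Real.cos θ :=
    Real.cos_pos_of_mem_Ioo ⟨by linarith, hθlt⟩
  have hcαθ : 0 < Real.cos (α + θ) :=
    Real.cos_pos_of_mem_Ioo ⟨by linarith, hαθ⟩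
  have hne : Real.cos α * Real.cos θ - Real.sin α * Real.sin θ ≠ 0 := by
    rw [← Real.cos_add]; exact hcαθ.ne'
  -- tan addition identity
  have hid : Real.tan α + Real.tan θ =
      Real.tan (α + θ) * (1 - Real.tan α * Real.tan θ) := by
    rw [Real.tan_eq_sin_div_cos, Real.tan_eq_sin_div_cos, Real.tan_eq_sin_div_cos,
      Real.sin_add, Real.cos_add]
    field_simp
  have htα : 0 ≤ Real.tan α := Real.tan_nonneg_of_nonneg_of_le_pi_div_two hα0 (by linarith)
  have htθ : 0 ≤ Real.tan θ := Real.tan_nonneg_of_nonneg_of_le_pi_div_two hθ0 (by linarith)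
  have htαθ : 0 ≤ Real.tan (α + θ) :=
    Real.tan_nonneg_of_nonneg_of_le_pi_div_two (by linarith) (by linarith)
  -- value of tan α
  have hs0 : 0 < Real.sqrt (p - 1) := Real.sqrt_pos.2 (by linarith)
  have hs2 : Real.sqrt (p - 1) ^ 2 = p - 1 := Real.sq_sqrt (by linarith)
  have hcosa : Real.cos a = |1 - 2 / p| := Real.cos_arccos (by linarith) habs1
  have hsina : Real.sin a = 2 * Real.sqrt (p - 1) / p := by
    rw [ha, Real.sin_arccos, sq_abs]
    have h1 : 1 - (1 - 2 / p) ^ 2 = (2 * Real.sqrt (p - 1) / p) ^ 2 := by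
      field_simp
      nlinarith [hs2]
    rw [h1, Real.sqrt_sq (by positivity)]
  have habsval : |1 - 2 / p| = |p - 2| / p := by
    rw [show (1 : ℝ) - 2 / p = (p - 2) / p by field_simp, abs_div, abs_of_pos hp0]
  have htanα : Real.tan α = |p - 2| / (2 * Real.sqrt (p - 1)) := by
    rw [hα, Real.tan_pi_div_two_sub, Real.tan_eq_sin_div_cos, inv_div, hcosa, hsina, habsval]
    field_simp
  -- key bound
  set S := Rs.mulVec ξ ⬝ᵥ ξ + Rs.mulVec η ⬝ᵥ η with hS
  set B := Bs.mulVec ξ ⬝ᵥ η with hB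
  have hS0 : 0 ≤ S := add_nonneg (hpos ξ) (hpos η)
  have habsc : |(p - 2) / Real.sqrt (p - 1)| = 2 * Real.tan α := by
    rw [htanα, abs_div, abs_of_pos hs0]
    field_simp
  have hBbound : |B| ≤ (1 / 2) * Real.tan θ * S := hdom ξ η
  have hkey : 0 ≤ (p - 2) / Real.sqrt (p - 1) * B + Real.tan α * Real.tan θ * S := by
    have h1 : |(p - 2) / Real.sqrt (p - 1) * B| ≤ Real.tan α * Real.tan θ * S := by
      rw [abs_mul, habsc]
      calc 2 * Real.tan α * |B| ≤ 2 * Real.tan α * ((1 / 2) * Real.tan θ * S) := by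
            apply mul_le_mul_of_nonneg_left hBbound (by positivity)
        _ = Real.tan α * Real.tan θ * S := by ring
    have := neg_abs_le ((p - 2) / Real.sqrt (p - 1) * B)
    linarith
  -- conclude
  clear_value S B
  rw [hid]
  nlinarith [mul_nonneg htαθ hkey]
end

section
/- Let θ ∈ [0, π/2) and φ ∈ (θ, π/2] and set ψ₁ = π/2 − arctan(((2/sin φ − 1) tan θ + cot φ) / (1 − (tan θ)(cot φ))). Assume 1 − (tan θ)(cot φ) > 0. Then tan ψ₁ = (1 − (tan θ) cot φ) / ((2/sin φ − 1) tan θ + cot φ) ≤ tan(φ − θ), and hence ψ₁ ≤ φ − θ. -/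
theorem stmt_10 (θ φ : ℝ) (hθ : θ ∈ Set.Ico 0 (Real.pi / 2))
    (hφ : φ ∈ Set.Ioc θ (Real.pi / 2))
    (hpos : 0 < 1 - Real.tan θ * (Real.cos φ / Real.sin φ)) :
    Real.tan (Real.pi / 2 - Real.arctan
        (((2 / Real.sin φ - 1) * Real.tan θ + Real.cos φ / Real.sin φ) /
          (1 - Real.tan θ * (Real.cos φ / Real.sin φ))))
      = (1 - Real.tan θ * (Real.cos φ / Real.sin φ)) /
          ((2 / Real.sin φ - 1) * Real.tan θ + Real.cos φ / Real.sin φ) ∧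
    (1 - Real.tan θ * (Real.cos φ / Real.sin φ)) /
        ((2 / Real.sin φ - 1) * Real.tan θ + Real.cos φ / Real.sin φ)
      ≤ Real.tan (φ - θ) ∧
    Real.pi / 2 - Real.arctan
        (((2 / Real.sin φ - 1) * Real.tan θ + Real.cos φ / Real.sin φ) /
          (1 - Real.tan θ * (Real.cos φ / Real.sin φ)))
      ≤ φ - θ := by
  obtain ⟨hθ0, hθ2⟩ := hθ
  obtain ⟨hφθ, hφ2⟩ := hφ
  have hpi := Real.pi_pos
  have hφ0 : 0 < φ := lt_of_le_of_lt hθ0 hφθ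
  have hsφ : 0 < Real.sin φ := Real.sin_pos_of_pos_of_lt_pi hφ0 (by linarith)
  have hcθ : 0 < Real.cos θ := Real.cos_pos_of_mem_Ioo ⟨by linarith, hθ2⟩
  have hsθ : 0 ≤ Real.sin θ := Real.sin_nonneg_of_nonneg_of_le_pi hθ0 (by linarith)
  have hcφ : 0 ≤ Real.cos φ := Real.cos_nonneg_of_mem_Icc ⟨by linarith, hφ2⟩
  have htθ : 0 ≤ Real.tan θ := by
    rw [Real.tan_eq_sin_div_cos]; exact div_nonneg hsθ hcθ.le
  have hs1 : Real.sin φ ≤ 1 := Real.sin_le_one φ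
  have h2s : (1:ℝ) ≤ 2 / Real.sin φ - 1 := by
    rw [le_sub_iff_add_le, le_div_iff₀ hsφ]; linarith
  set num := (2 / Real.sin φ - 1) * Real.tan θ + Real.cos φ / Real.sin φ with hnumdef
  set den := 1 - Real.tan θ * (Real.cos φ / Real.sin φ) with hdendef
  have hnum0 : 0 ≤ num :=
    add_nonneg (mul_nonneg (by linarith) htθ) (div_nonneg hcφ hsφ.le)
  have hpart1 : Real.tan (Real.pi / 2 - Real.arctan (num / den)) = den / num := by
    rw [Real.tan_pi_div_two_sub, Real.tan_arctan, inv_div]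
  rcases eq_or_lt_of_le hnum0 with hz | hnum
  · -- degenerate case: num = 0, forces θ = 0, φ = π/2
    have hz' : (2 / Real.sin φ - 1) * Real.tan θ + Real.cos φ / Real.sin φ = 0 := by
      rw [← hnumdef]; exact hz.symm
    have ha : 0 ≤ (2 / Real.sin φ - 1) * Real.tan θ := mul_nonneg (by linarith) htθ
    have hb : 0 ≤ Real.cos φ / Real.sin φ := div_nonneg hcφ hsφ.le
    have h1 : (2 / Real.sin φ - 1) * Real.tan θ = 0 := by linarith
    have h2 : Real.cos φ / Real.sin φ = 0 := by linarith
    have htz : Real.tan θ = 0 := by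
      rcases mul_eq_zero.mp h1 with h | h
      · linarith
      · exact h
    have hsz : Real.sin θ = 0 := by
      have h := Real.tan_eq_sin_div_cos θ
      rw [htz, eq_comm, div_eq_zero_iff] at h
      rcases h with h | h
      · exact h
      · exact absurd h hcθ.ne'
    have hθz : θ = 0 := (Real.sin_eq_zero_iff_of_lt_of_lt (by linarith) (by linarith)).mp hsz
    have hcz : Real.cos φ = 0 := by
      rw [div_eq_zero_iff] at h2
      rcases h2 with h | h
      · exact h
      · exact absurd h hsφ.ne'
    have hφz : φ = Real.pi / 2 := by
      rcases lt_or_eq_of_le hφ2 with h | h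
      · exact absurd hcz (ne_of_gt (Real.cos_pos_of_mem_Ioo ⟨by linarith, h⟩))
      · exact h
    rw [hθz, hφz]
    refine ⟨hpart1, ?_, ?_⟩
    · rw [← hz, div_zero, sub_zero, Real.tan_pi_div_two]
    · rw [← hz, zero_div, Real.arctan_zero]
  · -- main case: num > 0
    have hΔ0 : 0 < φ - θ := by linarith
    have hΔ2 : φ - θ < Real.pi / 2 := by
      by_contra h
      push_neg at h
      have hθz : θ = 0 := le_antisymm (by linarith) hθ0
      have hφz : φ = Real.pi / 2 := le_antisymm hφ2 (by linarith)
      have : num = 0 := by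
        rw [hnumdef, hθz, hφz]
        simp
      linarith
    have hcΔ : 0 < Real.cos (φ - θ) := Real.cos_pos_of_mem_Ioo ⟨by linarith, hΔ2⟩
    have hsΔ : 0 < Real.sin (φ - θ) := Real.sin_pos_of_pos_of_lt_pi hΔ0 (by linarith)
    have hT : 0 < Real.tan (φ - θ) := Real.tan_pos_of_pos_of_lt_pi_div_two hΔ0 hΔ2
    have hk : 0 < Real.cos θ * Real.sin φ := mul_pos hcθ hsφ
    have hE : 0 ≤ 2 * (1 - Real.sin φ) * Real.sin θ := by
      apply mul_nonneg (by linarith) hsθ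
    have hden_eq : den = Real.sin (φ - θ) / (Real.cos θ * Real.sin φ) := by
      rw [hdendef, Real.sin_sub, Real.tan_eq_sin_div_cos]
      field_simp
    have hnum_eq : num = (Real.cos (φ - θ) + 2 * (1 - Real.sin φ) * Real.sin θ) /
        (Real.cos θ * Real.sin φ) := by
      rw [hnumdef, Real.cos_sub, Real.tan_eq_sin_div_cos]
      field_simp
      ring
    have hB : 0 < Real.cos (φ - θ) + 2 * (1 - Real.sin φ) * Real.sin θ := by linarith
    have heq : den / num = Real.sin (φ - θ) /
        (Real.cos (φ - θ) + 2 * (1 - Real.sin φ) * Real.sin θ) := by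
      rw [hden_eq, hnum_eq]
      field_simp
    have hkey : den / num ≤ Real.tan (φ - θ) := by
      rw [heq, Real.tan_eq_sin_div_cos]
      gcongr
      linarith
    refine ⟨hpart1, hkey, ?_⟩
    have hden : 0 ≤ den := hpos.le
    have h4 : den ≤ Real.tan (φ - θ) * num := (div_le_iff₀ hnum).mp hkey
    have hinv : Real.tan (Real.pi / 2 - (φ - θ)) ≤ num / den := by
      rw [Real.tan_pi_div_two_sub, inv_eq_one_div, div_le_div_iff₀ hT hpos]
      nlinarith
    have h5 := Real.arctan_strictMono.monotone hinv
    rw [Real.arctan_tan (by linarith) (by linarith)] at h5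
    linarith
end

section
/- Let θ ∈ [0, π/2), p ∈ (1, ∞) with |1 − 2/p| < cos θ, φ = arccos|1 − 2/p|. Let R_s, B_s be real symmetric d×d matrices with R_s positive semidefinite and |(B_s ξ, ξ)| ≤ (tan θ)(R_s ξ, ξ) for all ξ ∈ ℝ^d. Then for all ξ', η ∈ ℝ^d: |(B_s ξ', ξ') + (B_s η, η) − ((p−2)/√(p−1))(R_s ξ', η)| ≤ tan(π/2 − φ + θ)((R_s ξ', ξ') + (R_s η, η) + ((p−2)/√(p−1))(B_s ξ', η)). -/
/-!
Put `λ = (p - 2) / (2 √(p - 1))`; then `|λ| = tan α` with `α = π/2 - φ`. The hypothesis on `B_s`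
says that `(R_s ξ, ξ) + i (B_s ξ, ξ)` lies in the closed sector of half-angle `θ`. Multiplying
`A + iU` by `1 - iλ` gives `(A + λU) + i(U - λA)` and turns the sector by at most `α`, so this
number lies in the sector of half-angle `α + θ < π/2`. Applying this to `ξ' + η` with `λ` and to
`ξ' - η` with `-λ` and adding, polarization leaves exactly the two sides of the claim.
-/

open Matrix Real

namespace Matrix

variable {n R : Type*} [Fintype n] [CommRing R] {M : Matrix n n R}

lemma IsSymm.mulVec_dotProduct_comm (hM : M.IsSymm) (x y : n → R) :
    M *ᵥ x ⬝ᵥ y = M *ᵥ y ⬝ᵥ x := by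
  rw [dotProduct_comm, dotProduct_mulVec, ← mulVec_transpose, hM.eq]

lemma IsSymm.mulVec_add_dotProduct_add (hM : M.IsSymm) (x y : n → R) :
    M *ᵥ (x + y) ⬝ᵥ (x + y) = M *ᵥ x ⬝ᵥ x + M *ᵥ y ⬝ᵥ y + 2 * (M *ᵥ x ⬝ᵥ y) := by
  simp only [mulVec_add, add_dotProduct, dotProduct_add, hM.mulVec_dotProduct_comm y x]
  ring

lemma IsSymm.mulVec_sub_dotProduct_sub (hM : M.IsSymm) (x y : n → R) :
    M *ᵥ (x - y) ⬝ᵥ (x - y) = M *ᵥ x ⬝ᵥ x + M *ᵥ y ⬝ᵥ y - 2 * (M *ᵥ x ⬝ᵥ y) := by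
  simp only [mulVec_sub, sub_dotProduct, dotProduct_sub, hM.mulVec_dotProduct_comm y x]
  ring

end Matrix

namespace Real

lemma tan_add_of_cos_ne_zero {x y : ℝ} (hx : cos x ≠ 0) (hy : cos y ≠ 0) :
    tan (x + y) = (tan x + tan y) / (1 - tan x * tan y) := by
  rw [tan_eq_sin_div_cos, tan_eq_sin_div_cos, tan_eq_sin_div_cos, sin_add, cos_add,
    div_add_div _ _ hx hy, div_mul_div_comm, one_sub_div (mul_ne_zero hx hy),
    div_div_div_cancel_right₀ (mul_ne_zero hx hy)]

lemma tan_mul_tan_lt_one {x y : ℝ} (hx : 0 < cos x) (hy : 0 < cos y) (hxy : 0 < cos (x + y)) :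
    tan x * tan y < 1 := by
  rw [tan_eq_sin_div_cos, tan_eq_sin_div_cos, div_mul_div_comm, div_lt_one (by positivity)]
  rw [cos_add] at hxy
  linarith

end Real

lemma abs_sub_mul_mul_one_sub_le {A U l t : ℝ} (hA : 0 ≤ A) (htl : t * |l| < 1)
    (hU : |U| ≤ t * A) : |U - l * A| * (1 - t * |l|) ≤ (t + |l|) * (A + l * U) := by
  wlog hl : 0 ≤ l generalizing U l
  · have := this (U := -U) (l := -l) (by rwa [abs_neg]) (by rwa [abs_neg]) (by linarith)
    rw [abs_neg, show -U - -l * A = -(U - l * A) by ring, abs_neg] at this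
    linarith
  rw [abs_of_nonneg hl] at htl ⊢
  have htA : 0 ≤ t * A := (abs_nonneg U).trans hU
  obtain ⟨hU₁, hU₂⟩ := abs_le.1 hU
  rcases abs_cases (U - l * A) with ⟨h, -⟩ | ⟨h, -⟩ <;> rw [h]
  · -- the claim reads `U K ≤ A (t + 2l - t l²)` with `K = 1 - 2tl - l²`; the sign of `K` decides
    -- which bound on `U` to use
    rcases le_total 0 (1 - 2 * t * l - l ^ 2) with hK | hK
    · nlinarith [mul_nonneg (sub_nonneg.2 hU₂) hK,
        mul_nonneg hA (by positivity : 0 ≤ l * (1 + t ^ 2))]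
    · nlinarith [mul_nonneg (by linarith : 0 ≤ U + t * A) (neg_nonneg.2 hK),
        mul_nonneg (by positivity : 0 ≤ t * A + l * A) (by linarith : 0 ≤ 1 - t * l)]
  · nlinarith [mul_nonneg (by linarith : 0 ≤ U + t * A) (by positivity : (0:ℝ) ≤ 1 + l ^ 2)]

lemma abs_sub_mul_le_tan_add_mul {A U l α θ : ℝ} (hA : 0 ≤ A) (hα : 0 ≤ α) (hθ : 0 ≤ θ)
    (hαθ : α + θ < π / 2) (hl : |l| = tan α) (hU : |U| ≤ tan θ * A) :
    |U - l * A| ≤ tan (α + θ) * (A + l * U) := by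
  have hcos : ∀ x, 0 ≤ x → x ≤ α + θ → 0 < cos x := fun x hx₀ hx =>
    cos_pos_of_mem_Ioo ⟨by linarith, by linarith⟩
  have hα' := hcos α hα (by linarith)
  have hθ' := hcos θ hθ (by linarith)
  have hlt : tan θ * |l| < 1 := by
    rw [hl, mul_comm]
    exact tan_mul_tan_lt_one hα' hθ' (hcos _ (by linarith) le_rfl)
  rw [add_comm α θ, tan_add_of_cos_ne_zero hθ'.ne' hα'.ne', ← hl, div_mul_eq_mul_div,
    le_div_iff₀ (by linarith)]
  exact abs_sub_mul_mul_one_sub_le hA hlt hU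

lemma abs_div_sqrt_div_two_eq_tan {p : ℝ} (hp : 1 < p) :
    |(p - 2) / √(p - 1) / 2| = tan (π / 2 - arccos |1 - 2 / p|) := by
  have hp₀ : 0 < p := by linarith
  have hq : 0 < √(p - 1) := sqrt_pos.2 (by linarith)
  have hc : |1 - 2 / p| = |p - 2| / p := by
    rw [one_sub_div hp₀.ne', abs_div, abs_of_pos hp₀]
  have hs : √(1 - |1 - 2 / p| ^ 2) = 2 * √(p - 1) / p := by
    rw [← sqrt_sq (by positivity : 0 ≤ 2 * √(p - 1) / p)]
    congr 1
    rw [hc, div_pow, sq_abs, div_pow, mul_pow, sq_sqrt (by linarith)]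
    field_simp
    ring
  rw [tan_pi_div_two_sub, tan_arccos, hs, hc, abs_div, abs_div, abs_of_pos hq, abs_two]
  field_simp

theorem stmt_12 (d : ℕ) (p θ : ℝ) (hp : 1 < p)
    (hθ : θ ∈ Set.Ico 0 (Real.pi / 2))
    (hpθ : |1 - 2 / p| < Real.cos θ)
    (Rs Bs : Matrix (Fin d) (Fin d) ℝ)
    (hRsym : Rs.IsSymm) (hBsym : Bs.IsSymm)
    (hpos : ∀ ξ : Fin d → ℝ, 0 ≤ Rs.mulVec ξ ⬝ᵥ ξ)
    (hdom : ∀ ξ : Fin d → ℝ, |Bs.mulVec ξ ⬝ᵥ ξ| ≤ Real.tan θ * (Rs.mulVec ξ ⬝ᵥ ξ)) :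
    ∀ ξ' η : Fin d → ℝ,
      |Bs.mulVec ξ' ⬝ᵥ ξ' + Bs.mulVec η ⬝ᵥ η
          - ((p - 2) / Real.sqrt (p - 1)) * (Rs.mulVec ξ' ⬝ᵥ η)| ≤
        Real.tan (Real.pi / 2 - Real.arccos |1 - 2 / p| + θ) *
          (Rs.mulVec ξ' ⬝ᵥ ξ' + Rs.mulVec η ⬝ᵥ η
            + ((p - 2) / Real.sqrt (p - 1)) * (Bs.mulVec ξ' ⬝ᵥ η)) := by
  intro ξ' η
  set l := (p - 2) / √(p - 1) / 2
  have hα : 0 ≤ π / 2 - arccos |1 - 2 / p| :=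
    sub_nonneg.2 (arccos_le_pi_div_two.2 (abs_nonneg _))
  have hθφ : θ < arccos |1 - 2 / p| := by
    have := arccos_lt_arccos (by linarith [abs_nonneg (1 - 2 / p)]) hpθ (cos_le_one θ)
    rwa [arccos_cos hθ.1 (by linarith [hθ.2, pi_pos])] at this
  have hl := abs_div_sqrt_div_two_eq_tan hp
  have hsum := abs_sub_mul_le_tan_add_mul (hpos (ξ' + η)) hα hθ.1 (by linarith) hl
    (hdom (ξ' + η))
  have hdiff := abs_sub_mul_le_tan_add_mul (hpos (ξ' - η)) hα hθ.1 (by linarith)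
    ((abs_neg l).trans hl) (hdom (ξ' - η))
  rw [hRsym.mulVec_add_dotProduct_add, hBsym.mulVec_add_dotProduct_add] at hsum
  rw [hRsym.mulVec_sub_dotProduct_sub, hBsym.mulVec_sub_dotProduct_sub] at hdiff
  rw [show (p - 2) / √(p - 1) = 2 * l by ring]
  obtain ⟨hsum₁, hsum₂⟩ := abs_le.1 hsum
  obtain ⟨hdiff₁, hdiff₂⟩ := abs_le.1 hdiff
  rw [abs_le]
  constructor
  · linear_combination (hsum₁ + hdiff₁) / 2
  · linear_combination (hsum₂ + hdiff₂) / 2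
end
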